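/- arXiv:2604.20091 — 9 statements merged into one kernel-verified Lean document; each statement's English description precedes it below -/
import Mathlib

section
/- If 1 < J ≤ (p+1)/2, then the cardinality of R_J is at most the cardinality of C_J. -/
/-- The set `C_J = { i' ∈ ℤ : 0 < i', p·i' < (p−J)·d, p ∤ i' }`. -/
def Cset (p d J : ℤ) : Set ℤ :=
  {i' : ℤ | 0 < i' ∧ p * i' < (p - J) * d ∧ ¬ p ∣ i'}

/-- The set `R_J = { (i,λ) : 0 < λ < J, (pλ−J+1)d < p²i < (p(λ+1)−J)d }`. -/
def Rset (p d J : ℤ) : Set (ℤ × ℤ) :=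
  {x : ℤ × ℤ | 0 < x.2 ∧ x.2 < J ∧
    (p * x.2 - J + 1) * d < p ^ 2 * x.1 ∧ p ^ 2 * x.1 < (p * (x.2 + 1) - J) * d}

/-- If `1 < J ≤ (p+1)/2`, then `|R_J| ≤ |C_J|`. -/
theorem stmt0 (p : ℕ) (hp : p.Prime) (hodd : Odd p) (d : ℤ) (hd : 0 < d)
    (hpd : ¬ (p : ℤ) ∣ d) (J : ℤ) (hJ1 : 1 < J) (hJ2 : 2 * J ≤ (p : ℤ) + 1) :
    (Rset p d J).ncard ≤ (Cset p d J).ncard := by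
  have hpZ : (2:ℤ) ≤ (p:ℤ) := by exact_mod_cast hp.two_le
  have hppZ : Prime (p:ℤ) := Nat.prime_iff_prime_int.mp hp
  have hJp : J < (p:ℤ) := by linarith
  -- the injection
  set f : ℤ × ℤ → ℤ := fun x => |(p:ℤ) * x.1 - x.2 * d| with hf
  -- key divisibility fact
  have key : ∀ x ∈ Rset p d J, ¬ (p:ℤ) ∣ ((p:ℤ) * x.1 - x.2 * d) := by
    rintro ⟨i, l⟩ ⟨hl0, hlJ, _, _⟩ hdvd
    have h1 : (p:ℤ) ∣ l * d := by
      have := dvd_sub (Dvd.intro i rfl) hdvd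
      simpa using this
    rcases hppZ.dvd_mul.mp h1 with h | h
    · exact absurd (Int.le_of_dvd hl0 h) (by dsimp at hl0 hlJ ⊢; linarith)
    · exact hpd h
  have hmaps : ∀ x ∈ Rset p d J, f x ∈ Cset p d J := by
    rintro ⟨i, l⟩ hx
    obtain ⟨hl0, hlJ, hlo, hhi⟩ := hx
    dsimp at hl0 hlJ hlo hhi
    have hnd := key ⟨i, l⟩ ⟨hl0, hlJ, hlo, hhi⟩
    have hm0 : (p:ℤ) * i - l * d ≠ 0 := by
      intro h; exact hnd (h ▸ dvd_zero _)
    refine ⟨abs_pos.mpr hm0, ?_, fun h => hnd ((dvd_abs _ _).mp h)⟩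
    show (p:ℤ) * |(p:ℤ) * i - l * d| < ((p:ℤ) - J) * d
    rcases lt_or_gt_of_ne hm0 with hneg | hpos
    · rw [abs_of_neg hneg]
      nlinarith
    · rw [abs_of_pos hpos]
      nlinarith
  have hinj : Set.InjOn f (Rset p d J) := by
    rintro ⟨i1, l1⟩ hx ⟨i2, l2⟩ hy heq
    obtain ⟨h10, h1J, _, _⟩ := hx
    obtain ⟨h20, h2J, _, _⟩ := hy
    dsimp at h10 h1J h20 h2J
    have heq' : |(p:ℤ) * i1 - l1 * d| = |(p:ℤ) * i2 - l2 * d| := heq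
    rcases abs_eq_abs.mp heq' with h | h
    · -- same sign
      have hd1 : (p:ℤ) ∣ (l1 - l2) * d := ⟨i1 - i2, by ring_nf; linarith⟩
      have hdl : (p:ℤ) ∣ l1 - l2 := (hppZ.dvd_mul.mp hd1).resolve_right hpd
      have hll : l1 = l2 := by
        have := Int.eq_zero_of_abs_lt_dvd hdl (by rw [abs_lt]; constructor <;> linarith)
        linarith
      have hii : i1 = i2 := by
        have hp0 : (p:ℤ) ≠ 0 := by linarith
        apply mul_left_cancel₀ hp0
        rw [hll] at h; linarith
      simp [hll, hii]
    · -- opposite sign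
      exfalso
      have hd1 : (p:ℤ) ∣ (l1 + l2) * d := ⟨i1 + i2, by ring_nf; linarith⟩
      have hdl : (p:ℤ) ∣ l1 + l2 := (hppZ.dvd_mul.mp hd1).resolve_right hpd
      have := Int.le_of_dvd (by linarith) hdl
      linarith
  have hCfin : (Cset p d J).Finite := by
    apply Set.Finite.subset (Set.finite_Ioo (0:ℤ) (((p:ℤ) - J) * d))
    rintro i' ⟨h1, h2, _⟩
    exact ⟨h1, by nlinarith⟩
  exact Set.ncard_le_ncard_of_injOn f hmaps hinj hCfin
end

section
/- If (p+1)/2 ≤ J < p, then the cardinality of C_J is at most the cardinality of R_J. -/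
/-- Auxiliary injection from `Cset` into `Rset`: `a` goes to `((a+rd)/p, r)` if `r < J`,
and to `(((p-r)d-a)/p, p-r)` otherwise, where `rd ≡ -a (mod p)`. -/
def phiAux (p d J a r : ℤ) : ℤ × ℤ :=
  if r < J then ((a + r * d) / p, r) else (((p - r) * d - a) / p, p - r)

lemma phiAux_mem (p d J : ℤ) (hp0 : 0 < p) (hd : 0 < d) (hJ1 : p + 1 ≤ 2 * J)
    (hJ2 : J < p) (a r : ℤ) (ha0 : 0 < a) (ha1 : p * a < (p - J) * d)
    (hr0 : 0 < r) (hrp : r < p) (hdvd : p ∣ a + r * d) :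
    phiAux p d J a r ∈ Rset p d J := by
  have hpne : p ≠ 0 := hp0.ne'
  have hJ2' : (2 : ℤ) ≤ J := by linarith
  by_cases hc : r < J
  · have heq : p ^ 2 * ((a + r * d) / p) = p * (a + r * d) := by
      obtain ⟨m, hm⟩ := hdvd
      rw [hm, Int.mul_ediv_cancel_left _ hpne]; ring
    simp only [phiAux, if_pos hc, Rset, Set.mem_setOf_eq]
    refine ⟨hr0, hc, ?_, ?_⟩ <;> rw [heq]
    · nlinarith [mul_pos hp0 ha0,
        mul_le_mul_of_nonneg_right (show (1:ℤ) ≤ J - 1 by linarith) hd.le]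
    · nlinarith [ha1]
  · push_neg at hc
    have hdvd2 : p ∣ (p - r) * d - a := by
      obtain ⟨m, hm⟩ := hdvd
      exact ⟨d - m, by linear_combination -hm⟩
    have heq : p ^ 2 * (((p - r) * d - a) / p) = p * ((p - r) * d - a) := by
      obtain ⟨m, hm⟩ := hdvd2
      rw [hm, Int.mul_ediv_cancel_left _ hpne]; ring
    simp only [phiAux, if_neg (not_lt.mpr hc), Rset, Set.mem_setOf_eq]
    refine ⟨by linarith, by linarith, ?_, ?_⟩ <;> rw [heq]
    · nlinarith [ha1, mul_le_mul_of_nonneg_right (show p - J ≤ J - 1 by linarith) hd.le]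
    · nlinarith [mul_pos hp0 ha0, mul_pos (show (0:ℤ) < p - J by linarith) hd]

lemma phiAux_inj (p d J a b ra rb : ℤ) (hp0 : 0 < p) (hd : 0 < d)
    (ha0 : 0 < a) (hb0 : 0 < b) (hda : p ∣ a + ra * d) (hdb : p ∣ b + rb * d)
    (h : phiAux p d J a ra = phiAux p d J b rb) : a = b := by
  have hpne : p ≠ 0 := hp0.ne'
  have hda2 : p ∣ (p - ra) * d - a := by
    obtain ⟨m, hm⟩ := hda
    exact ⟨d - m, by linear_combination -hm⟩
  have hdb2 : p ∣ (p - rb) * d - b := by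
    obtain ⟨m, hm⟩ := hdb
    exact ⟨d - m, by linear_combination -hm⟩
  unfold phiAux at h
  by_cases hca : ra < J <;> by_cases hcb : rb < J
  · rw [if_pos hca, if_pos hcb] at h
    injection h with h1 h2
    have h3 : a + ra * d = b + rb * d := by
      calc a + ra * d = p * ((a + ra * d) / p) := (Int.mul_ediv_cancel' hda).symm
        _ = p * ((b + rb * d) / p) := by rw [h1]
        _ = b + rb * d := Int.mul_ediv_cancel' hdb
    rw [h2] at h3
    linarith
  · rw [if_pos hca, if_neg hcb] at h
    injection h with h1 h2
    have h3 : a + ra * d = (p - rb) * d - b := by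
      calc a + ra * d = p * ((a + ra * d) / p) := (Int.mul_ediv_cancel' hda).symm
        _ = p * (((p - rb) * d - b) / p) := by rw [h1]
        _ = (p - rb) * d - b := Int.mul_ediv_cancel' hdb2
    rw [h2] at h3
    exfalso; linarith
  · rw [if_neg hca, if_pos hcb] at h
    injection h with h1 h2
    have h3 : (p - ra) * d - a = b + rb * d := by
      calc (p - ra) * d - a = p * (((p - ra) * d - a) / p) := (Int.mul_ediv_cancel' hda2).symm
        _ = p * ((b + rb * d) / p) := by rw [h1]
        _ = b + rb * d := Int.mul_ediv_cancel' hdb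
    rw [← h2] at h3
    exfalso; linarith
  · rw [if_neg hca, if_neg hcb] at h
    injection h with h1 h2
    have h3 : (p - ra) * d - a = (p - rb) * d - b := by
      calc (p - ra) * d - a = p * (((p - ra) * d - a) / p) := (Int.mul_ediv_cancel' hda2).symm
        _ = p * (((p - rb) * d - b) / p) := by rw [h1]
        _ = (p - rb) * d - b := Int.mul_ediv_cancel' hdb2
    have h4 : ra = rb := by linarith
    rw [h4] at h3
    linarith

/-- If `(p+1)/2 ≤ J < p`, then `|C_J| ≤ |R_J|`. -/
theorem stmt1 (p : ℕ) (hp : p.Prime) (hodd : Odd p) (d : ℤ) (hd : 0 < d)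
    (hpd : ¬ (p : ℤ) ∣ d) (J : ℤ) (hJ1 : (p : ℤ) + 1 ≤ 2 * J) (hJ2 : J < (p : ℤ)) :
    (Cset p d J).ncard ≤ (Rset p d J).ncard := by
  have hp0 : (0 : ℤ) < (p : ℤ) := by exact_mod_cast hp.pos
  have hpne : ((p : ℤ)) ≠ 0 := ne_of_gt hp0
  -- an inverse of `d` mod `p`
  have hcop : IsCoprime ((p : ℤ)) d :=
    (Prime.coprime_iff_not_dvd (Nat.prime_iff_prime_int.mp hp)).mpr hpd
  obtain ⟨u, v, huv⟩ := hcop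
  -- basic facts about `r := (-(a*v)) % p` for `a ∈ Cset`
  have hrfacts : ∀ a ∈ Cset p d J, 0 < (-(a * v)) % (p : ℤ) ∧ (-(a * v)) % (p : ℤ) < (p : ℤ) ∧
      (p : ℤ) ∣ a + ((-(a * v)) % (p : ℤ)) * d := by
    intro a ha
    obtain ⟨ha0, ha1, ha2⟩ := ha
    have hrlt : (-(a * v)) % (p : ℤ) < (p : ℤ) := Int.emod_lt_of_pos _ hp0
    have hrnn : 0 ≤ (-(a * v)) % (p : ℤ) := Int.emod_nonneg _ hpne
    have hk : (-(a * v)) % (p : ℤ) = -(a * v) - (p : ℤ) * ((-(a * v)) / (p : ℤ)) :=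
      Int.emod_def _ _
    have hdvd : (p : ℤ) ∣ a + ((-(a * v)) % (p : ℤ)) * d := by
      refine ⟨a * u - ((-(a * v)) / (p : ℤ)) * d, ?_⟩
      rw [hk]
      linear_combination (-a) * huv
    have hrpos : 0 < (-(a * v)) % (p : ℤ) := by
      rcases hrnn.lt_or_eq with h | h
      · exact h
      · exfalso
        apply ha2
        rw [← h] at hdvd
        simpa using hdvd
    exact ⟨hrpos, hrlt, hdvd⟩
  -- the target set is finite
  have hRfin : (Rset p d J).Finite := by
    apply Set.Finite.subset ((Set.finite_Ioo (0 : ℤ) (J * d)).prod (Set.finite_Ioo (0 : ℤ) J))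
    rintro ⟨i, l⟩ ⟨h1, h2, h3, h4⟩
    simp only at h1 h2 h3 h4
    have hp2 : (0 : ℤ) < (p : ℤ) ^ 2 := by positivity
    have hJpos : (0 : ℤ) < J := lt_trans h1 h2
    constructor
    · simp only [Set.mem_Ioo]
      have hi1 : (0 : ℤ) < (p : ℤ) ^ 2 * i := by
        have hlow : (0 : ℤ) < ((p : ℤ) * l - J + 1) * d := by
          have : (1 : ℤ) ≤ (p : ℤ) * l - J + 1 := by nlinarith
          nlinarith
        linarith
      have hi2 : (p : ℤ) ^ 2 * i < (p : ℤ) ^ 2 * (J * d) := by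
        have e1 : ((p : ℤ) * (l + 1) - J) * d ≤ ((p : ℤ) * J - J) * d := by
          have : (p : ℤ) * (l + 1) - J ≤ (p : ℤ) * J - J := by nlinarith
          exact mul_le_mul_of_nonneg_right this hd.le
        have e2 : ((p : ℤ) * J - J) * d < (p : ℤ) ^ 2 * (J * d) := by nlinarith
        linarith
      have hipos : (0 : ℤ) < i := by
        by_contra hneg
        push_neg at hneg
        nlinarith
      exact ⟨hipos, lt_of_mul_lt_mul_left hi2 hp2.le⟩
    · exact ⟨h1, h2⟩
  apply Set.ncard_le_ncard_of_injOn (fun a => phiAux p d J a ((-(a * v)) % (p : ℤ))) _ _ hRfin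
  · intro a ha
    obtain ⟨hr0, hrp, hdvd⟩ := hrfacts a ha
    obtain ⟨ha0, ha1, -⟩ := ha
    exact phiAux_mem _ d J hp0 hd hJ1 hJ2 a _ ha0 ha1 hr0 hrp hdvd
  · intro a ha b hb hab
    obtain ⟨-, -, hdvda⟩ := hrfacts a ha
    obtain ⟨-, -, hdvdb⟩ := hrfacts b hb
    obtain ⟨ha0, -, -⟩ := ha
    obtain ⟨hb0, -, -⟩ := hb
    exact phiAux_inj _ d J a b _ _ hp0 hd ha0 hb0 hdvda hdvdb hab
end

section
/- If 1 < J ≤ (p+1)/2, then the map sending (i,λ) to the absolute value |p·i − λ·d| is well defined from R_J to C_J (i.e., for every (i,λ) ∈ R_J one has |p·i − λ·d| ∈ C_J) and is injective. -/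
/-- If `1 < J ≤ (p+1)/2`, the map `(i,λ) ↦ |p·i − λ·d|` is a well-defined injection
from `R_J` to `C_J`. -/
theorem stmt2 (p : ℕ) (hp : p.Prime) (hodd : Odd p) (d : ℤ) (hd : 0 < d)
    (hpd : ¬ (p : ℤ) ∣ d) (J : ℤ) (hJ1 : 1 < J) (hJ2 : 2 * J ≤ (p : ℤ) + 1) :
    (∀ x ∈ Rset p d J, |(p : ℤ) * x.1 - x.2 * d| ∈ Cset p d J) ∧
      Set.InjOn (fun x : ℤ × ℤ => |(p : ℤ) * x.1 - x.2 * d|) (Rset p d J) := by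
  have hp3 : 3 ≤ (p : ℤ) := by
    have h2 := hp.two_le
    rcases hodd with ⟨k, hk⟩
    have : 3 ≤ p := by omega
    exact_mod_cast this
  have hpP : Prime ((p : ℤ)) := Nat.prime_iff_prime_int.mp hp
  have key : ∀ x ∈ Rset p d J, ¬ (p : ℤ) ∣ ((p : ℤ) * x.1 - x.2 * d) := by
    rintro ⟨i, l⟩ ⟨hl0, hlJ, h1, h2⟩ ⟨c, hc⟩
    simp only at hl0 hlJ h1 h2 hc
    have hdl : (p : ℤ) ∣ l * d := ⟨i - c, by linear_combination -hc⟩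
    rcases hpP.dvd_mul.mp hdl with h | h
    · have hlt : |l| < (p : ℤ) := by rw [abs_of_pos hl0]; omega
      have := Int.eq_zero_of_abs_lt_dvd h hlt
      omega
    · exact hpd h
  have mem : ∀ x ∈ Rset p d J, |(p : ℤ) * x.1 - x.2 * d| ∈ Cset p d J := by
    rintro ⟨i, l⟩ hx
    have hnd := key _ hx
    obtain ⟨hl0, hlJ, h1, h2⟩ := hx
    simp only at hl0 hlJ h1 h2 hnd ⊢
    have hvne : (p : ℤ) * i - l * d ≠ 0 := fun h => hnd (h ▸ dvd_zero _)
    have hub : (p : ℤ) * ((p : ℤ) * i - l * d) < ((p : ℤ) - J) * d := by nlinarith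
    have hlb : (1 - J) * d < (p : ℤ) * ((p : ℤ) * i - l * d) := by nlinarith
    refine ⟨abs_pos.mpr hvne, ?_, fun h => hnd ((dvd_abs _ _).mp h)⟩
    rcases abs_cases ((p : ℤ) * i - l * d) with ⟨he, _⟩ | ⟨he, hneg⟩
    · rw [he]; exact hub
    · rw [he]
      have h3 : (J - 1) * d ≤ ((p : ℤ) - J) * d := by
        apply mul_le_mul_of_nonneg_right _ hd.le; linarith
      nlinarith
  refine ⟨mem, ?_⟩
  rintro ⟨i1, l1⟩ hx ⟨i2, l2⟩ hy h
  obtain ⟨ha0, haJ, -, -⟩ := hx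
  obtain ⟨hb0, hbJ, -, -⟩ := hy
  simp only at h ha0 haJ hb0 hbJ
  have hP0 : (p : ℤ) ≠ 0 := by positivity
  rcases abs_eq_abs.mp h with he | he
  · have hd1 : (p : ℤ) ∣ (l1 - l2) * d := ⟨i1 - i2, by linear_combination -he⟩
    have hl : l1 = l2 := by
      rcases hpP.dvd_mul.mp hd1 with h' | h'
      · have hlt : |l1 - l2| < (p : ℤ) := by rw [abs_lt]; omega
        have := Int.eq_zero_of_abs_lt_dvd h' hlt
        omega
      · exact absurd h' hpd
    have hi : i1 = i2 := by
      have : (p : ℤ) * i1 = (p : ℤ) * i2 := by rw [hl] at he; linarith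
      exact mul_left_cancel₀ hP0 this
    simp [hi, hl]
  · exfalso
    have hd1 : (p : ℤ) ∣ (l1 + l2) * d := ⟨i1 + i2, by linear_combination -he⟩
    rcases hpP.dvd_mul.mp hd1 with h' | h'
    · have hlt : |l1 + l2| < (p : ℤ) := by rw [abs_lt]; omega
      have := Int.eq_zero_of_abs_lt_dvd h' hlt
      omega
    · exact hpd h'
end

section
/- Suppose (p+1)/2 ≤ J < p. For each i' ∈ C_J there is a unique integer ι with 0 < ι < d and p·ι ≡ i' (mod d); set ρ = (p·ι − i')/d. Then 0 < ρ < p; moreover, if ρ < J then (ι, ρ) ∈ R_J, while if ρ ≥ J then (d−ι, p−ρ) ∈ R_J; and the map from C_J to R_J sending i' to (ι,ρ) if ρ < J and to (d−ι, p−ρ) if ρ ≥ J is injective. -/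
/-- The map `C_J → R_J` from Proposition 3.4(2): `i' ↦ (ι,ρ)` if `ρ < J`,
and `i' ↦ (d−ι, p−ρ)` if `ρ ≥ J`, where `ρ = (p·ι − i')/d`. -/
def gmap (p d J : ℤ) (i' ι : ℤ) : ℤ × ℤ :=
  if (p * ι - i') / d < J then (ι, (p * ι - i') / d)
  else (d - ι, p - (p * ι - i') / d)

/-- If `(p+1)/2 ≤ J < p`: for each `i' ∈ C_J` there is a unique `ι` with `0 < ι < d`
and `p·ι ≡ i' (mod d)`; setting `ρ = (p·ι − i')/d` one has `0 < ρ < p`, and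
`(ι,ρ) ∈ R_J` if `ρ < J` while `(d−ι, p−ρ) ∈ R_J` if `ρ ≥ J`; moreover the
resulting map `C_J → R_J` is injective. -/
theorem stmt3 (p : ℕ) (hp : p.Prime) (hodd : Odd p) (d : ℤ) (hd : 0 < d)
    (hpd : ¬ (p : ℤ) ∣ d) (J : ℤ) (hJ1 : (p : ℤ) + 1 ≤ 2 * J) (hJ2 : J < (p : ℤ)) :
    (∀ i' ∈ Cset p d J, ∃! ι : ℤ, 0 < ι ∧ ι < d ∧ d ∣ ((p : ℤ) * ι - i')) ∧
    (∀ i' ∈ Cset p d J, ∀ ι : ℤ, 0 < ι → ι < d → d ∣ ((p : ℤ) * ι - i') →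
      (0 < ((p : ℤ) * ι - i') / d ∧ ((p : ℤ) * ι - i') / d < (p : ℤ)) ∧
      (((p : ℤ) * ι - i') / d < J → (ι, ((p : ℤ) * ι - i') / d) ∈ Rset p d J) ∧
      (J ≤ ((p : ℤ) * ι - i') / d →
        (d - ι, (p : ℤ) - ((p : ℤ) * ι - i') / d) ∈ Rset p d J)) ∧
    (∀ i'₁ ∈ Cset p d J, ∀ i'₂ ∈ Cset p d J, ∀ ι₁ ι₂ : ℤ,
      0 < ι₁ → ι₁ < d → d ∣ ((p : ℤ) * ι₁ - i'₁) →
      0 < ι₂ → ι₂ < d → d ∣ ((p : ℤ) * ι₂ - i'₂) →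
      gmap p d J i'₁ ι₁ = gmap p d J i'₂ ι₂ → i'₁ = i'₂) := by
  set P : ℤ := (p : ℤ) with hP
  have hPpos : (0 : ℤ) < P := Int.natCast_pos.mpr hp.pos
  have hJ2' : 2 ≤ J := by linarith
  have hprime : Prime P := Nat.prime_iff_prime_int.mp hp
  have hcop : IsCoprime P d := hprime.coprime_iff_not_dvd.mpr hpd
  -- every element of Cset is < d
  have hlt : ∀ i' ∈ Cset p d J, i' < d := by
    rintro i' ⟨h1, h2, h3⟩
    by_contra h
    push_neg at h
    have h4 : P * d ≤ P * i' := mul_le_mul_of_nonneg_left h hPpos.le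
    have h5 : 0 < J * d := mul_pos (by linarith) hd
    linarith
  refine ⟨?_, ?_, ?_⟩
  · -- existence and uniqueness of ι
    rintro i' hi'
    obtain ⟨h1, h2, h3⟩ := hi'
    have h4 : i' < d := hlt i' ⟨h1, h2, h3⟩
    obtain ⟨a, b, hab⟩ := id hcop
    set ι := (a * i') % d with hιdef
    have hι0 : 0 ≤ ι := Int.emod_nonneg _ hd.ne'
    have hιd : ι < d := Int.emod_lt_of_pos _ hd
    have h5 : d ∣ ι - a * i' := by
      rw [hιdef, Int.emod_def]
      exact ⟨-((a * i') / d), by ring⟩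
    have hkey : d ∣ P * (a * i') - i' := ⟨-b * i', by linear_combination i' * hab⟩
    have hdvd : d ∣ P * ι - i' := by
      have heq : P * ι - i' = P * (ι - a * i') + (P * (a * i') - i') := by ring
      rw [heq]
      exact dvd_add (h5.mul_left P) hkey
    have hιpos : 0 < ι := by
      rcases hι0.lt_or_eq with h | h
      · exact h
      · exfalso
        have hdi : d ∣ i' := by
          have h6 := hdvd
          rw [← h] at h6
          simpa using (dvd_neg.mpr h6)
        have := Int.le_of_dvd h1 hdi
        linarith
    refine ⟨ι, ⟨hιpos, hιd, hdvd⟩, ?_⟩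
    rintro y ⟨hy1, hy2, hy3⟩
    have h6 : d ∣ P * (y - ι) := by
      have heq : P * (y - ι) = (P * y - i') - (P * ι - i') := by ring
      rw [heq]
      exact dvd_sub hy3 hdvd
    have h7 : d ∣ y - ι := IsCoprime.dvd_of_dvd_mul_left hcop.symm h6
    by_contra hne
    have hne' : y - ι ≠ 0 := sub_ne_zero.mpr hne
    have h8 : d ≤ |y - ι| := Int.le_of_dvd (abs_pos.mpr hne') ((dvd_abs d _).mpr h7)
    have h9 : |y - ι| < d := abs_lt.mpr ⟨by linarith, by linarith⟩
    linarith
  · -- the bounds and membership claims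
    rintro i' hi' ι hι1 hι2 hι3
    obtain ⟨h1, h2, h3⟩ := hi'
    have h4 : i' < d := hlt i' ⟨h1, h2, h3⟩
    set ρ := (P * ι - i') / d with hρdef
    have e : ρ * d = P * ι - i' := Int.ediv_mul_cancel hι3
    have hPι : 0 < P * ι := mul_pos hPpos hι1
    have hρpos : 0 < ρ := by
      by_contra hρ
      push_neg at hρ
      rcases hρ.lt_or_eq with h | h
      · have : ρ * d ≤ -1 * d := mul_le_mul_of_nonneg_right (by linarith) hd.le
        linarith
      · refine h3 ⟨ι, ?_⟩
        have h0 : ρ * d = 0 * d := by rw [← h]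
        linarith
    have hρltP : ρ < P := by
      have h5 : P * ι ≤ P * (d - 1) := mul_le_mul_of_nonneg_left (by linarith) hPpos.le
      have h6 : ρ * d < P * d := by nlinarith
      exact lt_of_mul_lt_mul_right h6 hd.le
    have h2' : P ^ 2 * ι = P * i' + P * (ρ * d) := by linear_combination (-P) * e
    have fPi : 0 < P * i' := mul_pos hPpos h1
    have fJd : 0 < (J - 1) * d := mul_pos (by linarith) hd
    refine ⟨⟨hρpos, hρltP⟩, ?_, ?_⟩
    · intro hρJ
      simp only [Rset, Set.mem_setOf_eq]
      refine ⟨hρpos, hρJ, by linarith, by linarith⟩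
    · intro hρJ
      have f3 : (P - J) * d ≤ (J - 1) * d := mul_le_mul_of_nonneg_right (by linarith) hd.le
      have f4 : 0 < (P - J) * d := mul_pos (by linarith) hd
      simp only [Rset, Set.mem_setOf_eq]
      refine ⟨by linarith, by linarith, by linarith, by linarith⟩
  · -- injectivity
    rintro i'₁ hi'₁ i'₂ hi'₂ ι₁ ι₂ hι₁1 hι₁2 hι₁3 hι₂1 hι₂2 hι₂3 heq
    obtain ⟨h1₁, -, -⟩ := hi'₁
    obtain ⟨h1₂, -, -⟩ := hi'₂
    have e₁ : (P * ι₁ - i'₁) / d * d = P * ι₁ - i'₁ := Int.ediv_mul_cancel hι₁3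
    have e₂ : (P * ι₂ - i'₂) / d * d = P * ι₂ - i'₂ := Int.ediv_mul_cancel hι₂3
    simp only [gmap, ← hP] at heq
    obtain ⟨ρ₁, hρ₁⟩ : ∃ r, (P * ι₁ - i'₁) / d = r := ⟨_, rfl⟩
    obtain ⟨ρ₂, hρ₂⟩ : ∃ r, (P * ι₂ - i'₂) / d = r := ⟨_, rfl⟩
    rw [hρ₁] at e₁ heq
    rw [hρ₂] at e₂ heq
    split_ifs at heq with hA hB hB <;>
        rw [Prod.mk.injEq] at heq <;> obtain ⟨hx, hy⟩ := heq
    · subst hx; subst hy; linarith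
    · subst hx; subst hy; linarith [e₁, e₂, h1₁, h1₂]
    · subst hx; subst hy; linarith [e₁, e₂, h1₁, h1₂]
    · have hx' : ι₁ = ι₂ := by linarith
      have hy' : ρ₁ = ρ₂ := by linarith
      subst hx'; subst hy'; linarith [e₁, e₂]
end

section
/- Let 1 < J < p, let (i,λ) ∈ R_J and i' ∈ C_J, and suppose p·i − i' > λ·d. Then the integer i'' := p·i − λ·d satisfies i'' ∈ C_J and i'' > i'. -/
/-- If `(i,λ) ∈ R_J`, `i' ∈ C_J` and `p·i − i' > λ·d`, then `i'' = p·i − λ·d`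
lies in `C_J` and `i'' > i'`. -/
theorem stmt4 (p : ℕ) (hp : p.Prime) (hodd : Odd p) (d : ℤ) (hd : 0 < d)
    (hpd : ¬ (p : ℤ) ∣ d) (J : ℤ) (hJ1 : 1 < J) (hJ2 : J < (p : ℤ))
    (i lam : ℤ) (hR : (i, lam) ∈ Rset p d J) (i' : ℤ) (hC : i' ∈ Cset p d J)
    (hbig : lam * d < (p : ℤ) * i - i') :
    (p : ℤ) * i - lam * d ∈ Cset p d J ∧ i' < (p : ℤ) * i - lam * d := by
  obtain ⟨hl0, hlJ, h1, h2⟩ := hR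
  obtain ⟨hi0, hi1, hi2⟩ := hC
  have hpp : Prime ((p : ℤ)) := Nat.prime_iff_prime_int.mp hp
  refine ⟨⟨by linarith, by nlinarith [sq_nonneg (p : ℤ)], ?_⟩, by linarith⟩
  intro hdvd
  have hdl : (p : ℤ) ∣ lam * d := by
    have h : (p : ℤ) ∣ (p : ℤ) * i - ((p : ℤ) * i - lam * d) :=
      Dvd.dvd.sub (Dvd.intro i rfl) hdvd
    simpa using h
  rcases hpp.dvd_mul.mp hdl with h | h
  · have := Int.le_of_dvd hl0 h
    linarith
  · exact hpd h
end

section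
/- Let 1 < J < p, let T = { ((i,λ), i') ∈ R_J × C_J : p·i − i' ≤ λ·d }, and define φ((i,λ), i') = p·i − i' − (λ−1)·d for ((i,λ),i') ∈ T. Then: (a) for every ((i,λ),i') ∈ T one has 1 ≤ φ((i,λ),i') ≤ d; (b) for a fixed (i,λ), the values φ((i,λ),i') for the various i' with ((i,λ),i') ∈ T are pairwise distinct; (c) for a fixed i', if ((i₁,λ₁),i') ∈ T and ((i₂,λ₂),i') ∈ T satisfy φ((i₁,λ₁),i') = φ((i₂,λ₂),i'), then i₁ = i₂. -/
/-- Properties of `φ((i,λ),i') = p·i − i' − (λ−1)·d` on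
`T = { ((i,λ),i') ∈ R_J × C_J : p·i − i' ≤ λ·d }`:
(a) `1 ≤ φ ≤ d`; (b) for fixed `(i,λ)` the values of `φ` are distinct in `i'`;
(c) for fixed `i'`, equal values of `φ` force equal first coordinates `i`. -/
theorem stmt6 (p : ℕ) (hp : p.Prime) (hodd : Odd p) (d : ℤ) (hd : 0 < d)
    (hpd : ¬ (p : ℤ) ∣ d) (J : ℤ) (hJ1 : 1 < J) (hJ2 : J < (p : ℤ)) :
    (∀ x ∈ Rset p d J, ∀ i' ∈ Cset p d J, (p : ℤ) * x.1 - i' ≤ x.2 * d →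
      1 ≤ (p : ℤ) * x.1 - i' - (x.2 - 1) * d ∧
        (p : ℤ) * x.1 - i' - (x.2 - 1) * d ≤ d) ∧
    (∀ x ∈ Rset p d J, ∀ i'₁ ∈ Cset p d J, ∀ i'₂ ∈ Cset p d J,
      (p : ℤ) * x.1 - i'₁ ≤ x.2 * d → (p : ℤ) * x.1 - i'₂ ≤ x.2 * d →
      (p : ℤ) * x.1 - i'₁ - (x.2 - 1) * d = (p : ℤ) * x.1 - i'₂ - (x.2 - 1) * d →
      i'₁ = i'₂) ∧
    (∀ x₁ ∈ Rset p d J, ∀ x₂ ∈ Rset p d J, ∀ i' ∈ Cset p d J,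
      (p : ℤ) * x₁.1 - i' ≤ x₁.2 * d → (p : ℤ) * x₂.1 - i' ≤ x₂.2 * d →
      (p : ℤ) * x₁.1 - i' - (x₁.2 - 1) * d = (p : ℤ) * x₂.1 - i' - (x₂.2 - 1) * d →
      x₁.1 = x₂.1) := by
  have hpZ : (0 : ℤ) < (p : ℤ) := by exact_mod_cast hp.pos
  have hpprime : Prime ((p : ℤ)) := Nat.prime_iff_prime_int.mp hp
  refine ⟨?_, ?_, ?_⟩
  · rintro ⟨i, l⟩ ⟨hl0, hlJ, hlo, hhi⟩ i' ⟨hi'0, hi'u, hi'p⟩ hT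
    constructor
    · have key : (p : ℤ) * ((p : ℤ) * i - i' - (l - 1) * d) > d := by nlinarith
      nlinarith
    · linarith
  · rintro ⟨i, l⟩ _ i'₁ _ i'₂ _ _ _ h
    linarith
  · rintro ⟨i₁, l₁⟩ ⟨hl10, hl1J, _, _⟩ ⟨i₂, l₂⟩ ⟨hl20, hl2J, _, _⟩ i' _ _ _ h
    simp only at *
    have key : (p : ℤ) * (i₁ - i₂) = (l₁ - l₂) * d := by ring_nf; linarith
    have hdvd : (p : ℤ) ∣ (l₁ - l₂) * d := ⟨i₁ - i₂, by linarith [key]⟩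
    have hdl : (p : ℤ) ∣ (l₁ - l₂) := (hpprime.dvd_mul.mp hdvd).resolve_right hpd
    have hz : l₁ - l₂ = 0 := Int.eq_zero_of_abs_lt_dvd hdl (by
      rw [abs_lt]; constructor <;> linarith)
    have : (p : ℤ) * (i₁ - i₂) = 0 := by rw [key, hz]; ring
    have := mul_eq_zero.mp this
    rcases this with h' | h'
    · exact absurd h' (by positivity)
    · linarith
end

section
/- Let λ be an integer with 1 ≤ λ < p and let n be a nonnegative integer. Then b_{λ,n} = 0 in S if n > λ·d, and b_{λ,n} ≠ 0 in S if 0 ≤ n ≤ λ·d. -/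
/-- The generic polynomial `f = a_0 + a_1·x + ⋯ + a_d·x^d` with coefficients the
variables of the polynomial ring `S = k[a_0,…,a_d]`. -/
noncomputable def genPoly (k : Type*) [CommSemiring k] (d : ℕ) :
    Polynomial (MvPolynomial (Fin (d + 1)) k) :=
  ∑ m : Fin (d + 1), Polynomial.C (MvPolynomial.X m) * Polynomial.X ^ (m : ℕ)

/-- `b_{λ,n} ∈ S`, the coefficient of `x^n` in `f^λ`. -/
noncomputable def bcoef (k : Type*) [CommSemiring k] (d lam n : ℕ) :
    MvPolynomial (Fin (d + 1)) k :=
  ((genPoly k d) ^ lam).coeff n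

lemma not_dvd_choose {p a b : ℕ} (hp : p.Prime) (h : b ≤ a) (ha : a < p) :
    ¬ p ∣ a.choose b := by
  intro hdvd
  have h1 : a.choose b ∣ a.factorial := by
    exact ⟨b.factorial * (a - b).factorial, by
      rw [← Nat.choose_mul_factorial_mul_factorial h]; ring⟩
  have := (Nat.Prime.dvd_factorial hp).mp (hdvd.trans h1)
  omega

lemma coeff_one_add_X_pow {R : Type*} [CommSemiring R] (e m t : ℕ) (he : 0 < e) (ht : t ≤ m) :
    ((1 + (Polynomial.X : Polynomial R) ^ e) ^ m).coeff (t * e) = m.choose t := by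
  rw [add_pow, Polynomial.finset_sum_coeff]
  rw [Finset.sum_eq_single (m - t)]
  · simp only [one_pow, one_mul, ← pow_mul, Nat.sub_sub_self ht]
    rw [← Polynomial.C_eq_natCast, Polynomial.coeff_mul_C, Polynomial.coeff_X_pow]
    simp [mul_comm, Nat.choose_symm ht]
  · intro j hj hne
    simp only [Finset.mem_range] at hj
    simp only [one_pow, one_mul, ← pow_mul]
    rw [← Polynomial.C_eq_natCast, Polynomial.coeff_mul_C, Polynomial.coeff_X_pow]
    have : e * (m - j) ≠ t * e := by
      have : m - j ≠ t := by omega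
      intro hc; apply this; exact Nat.eq_of_mul_eq_mul_left he (by rw [hc]; ring)
    rw [if_neg (fun hc => this (Eq.symm hc))]; simp
  · intro h; exact absurd (Finset.mem_range.mpr (by omega)) h

lemma genPoly_coeff (k : Type*) [CommSemiring k] (d t : ℕ) :
    (genPoly k d).coeff t = if h : t < d + 1 then MvPolynomial.X ⟨t, h⟩ else 0 := by
  unfold genPoly
  rw [Polynomial.finset_sum_coeff]
  split_ifs with h
  · rw [Finset.sum_eq_single (⟨t, h⟩ : Fin (d + 1))]
    · simp [Polynomial.coeff_C_mul, Polynomial.coeff_X_pow]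
    · intro m _ hne
      rw [Polynomial.coeff_C_mul, Polynomial.coeff_X_pow]
      have : (m : ℕ) ≠ t := fun hc => hne (Fin.ext hc)
      rw [if_neg (fun hc => this (Eq.symm hc))]; simp
    · simp
  · apply Finset.sum_eq_zero
    intro m _
    rw [Polynomial.coeff_C_mul, Polynomial.coeff_X_pow]
    have : (m : ℕ) ≠ t := by omega
    rw [if_neg (fun hc => this (Eq.symm hc))]; simp

lemma term_coeff {k : Type*} [CommSemiring k] (P : Polynomial k) (d n q j s a : ℕ) :
    ((((Polynomial.map (Polynomial.C) P) ^ j *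
        (Polynomial.C Polynomial.X * Polynomial.X ^ d) ^ s *
        ((a : ℕ) : Polynomial (Polynomial k))).coeff n).coeff q)
      = if s = q ∧ d * s ≤ n then (P ^ j).coeff (n - d * s) * a else 0 := by
  have e1 : (Polynomial.C (Polynomial.X : Polynomial k) * Polynomial.X ^ d) ^ s
      = Polynomial.C ((Polynomial.X : Polynomial k) ^ s) * Polynomial.X ^ (d * s) := by
    rw [mul_pow, ← map_pow, ← pow_mul]
  rw [e1, ← Polynomial.map_pow]
  have e2 : Polynomial.map (Polynomial.C) (P ^ j) *
      (Polynomial.C ((Polynomial.X : Polynomial k) ^ s) * Polynomial.X ^ (d * s)) *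
      ((a : ℕ) : Polynomial (Polynomial k))
      = (Polynomial.map (Polynomial.C) (P ^ j) * Polynomial.C ((Polynomial.X : Polynomial k) ^ s) *
          Polynomial.C ((a : ℕ) : Polynomial k)) * Polynomial.X ^ (d * s) := by
    rw [Polynomial.C_eq_natCast]; ring
  rw [e2, Polynomial.coeff_mul_X_pow']
  by_cases hds : d * s ≤ n
  · rw [if_pos hds, Polynomial.coeff_mul_C, Polynomial.coeff_mul_C, Polynomial.coeff_map,
      ← Polynomial.C_eq_natCast, Polynomial.coeff_mul_C, Polynomial.coeff_C_mul,
      Polynomial.coeff_X_pow]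
    by_cases hsq : q = s
    · rw [if_pos hsq, if_pos ⟨hsq.symm, hds⟩]; ring
    · rw [if_neg hsq, if_neg (fun hc => hsq (Eq.symm hc.1))]; ring
  · rw [if_neg hds, if_neg (fun hc => hds hc.2)]
    simp

/-- For `1 ≤ λ < p`: `b_{λ,n} = 0` if `n > λ·d`, and `b_{λ,n} ≠ 0` if `n ≤ λ·d`. -/
theorem stmt8 (k : Type*) [Field k] (p : ℕ) (hp : p.Prime) (hodd : Odd p)
    [CharP k p] (d : ℕ) (hd : 0 < d) (hpd : ¬ p ∣ d)
    (lam : ℕ) (hlam1 : 1 ≤ lam) (hlam2 : lam < p) :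
    (∀ n : ℕ, lam * d < n → bcoef k d lam n = 0) ∧
      (∀ n : ℕ, n ≤ lam * d → bcoef k d lam n ≠ 0) := by
  have hgdeg : (genPoly k d).natDegree ≤ d := by
    apply Polynomial.natDegree_le_iff_coeff_eq_zero.mpr
    intro N hN
    rw [genPoly_coeff, dif_neg (by omega)]
  constructor
  · intro n hn
    unfold bcoef
    apply Polynomial.coeff_eq_zero_of_natDegree_lt
    calc ((genPoly k d) ^ lam).natDegree ≤ lam * (genPoly k d).natDegree :=
          Polynomial.natDegree_pow_le
      _ ≤ lam * d := Nat.mul_le_mul_left _ hgdeg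
      _ < n := hn
  · intro n hn hzero
    obtain ⟨q, r, hn', hrd⟩ : ∃ q r, d * q + r = n ∧ r < d :=
      ⟨n / d, n % d, Nat.div_add_mod n d, Nat.mod_lt _ hd⟩
    have hq : q ≤ lam := by
      by_contra hc
      push_neg at hc
      have h1 : d * (lam + 1) ≤ d * q := Nat.mul_le_mul_left _ hc
      have h2 : lam * d = d * lam := Nat.mul_comm _ _
      have h3 : d * (lam + 1) = d * lam + d := by ring
      omega
    have hqlt : r ≠ 0 → q < lam := by
      intro h0
      by_contra hc
      push_neg at hc
      have h1 : d * lam ≤ d * q := Nat.mul_le_mul_left _ hc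
      have h2 : lam * d = d * lam := Nat.mul_comm _ _
      omega
    set P : Polynomial k := if r = 0 then 1 else 1 + Polynomial.X ^ r with hP
    have hPdeg : P.natDegree < d := by
      rw [hP]; split_ifs with h0
      · simpa using hd
      · have h1 : (1 + (Polynomial.X : Polynomial k) ^ r).natDegree ≤ r := by
          refine le_trans (Polynomial.natDegree_add_le _ _) ?_
          simp [Polynomial.natDegree_X_pow]
        omega
    have hPr : (P ^ (lam - q)).coeff r = ((if r = 0 then 1 else lam - q : ℕ) : k) := by
      rw [hP]
      split_ifs with h0
      · simp [h0]
      · have h1 : 1 ≤ lam - q := by have := hqlt h0; omega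
        have h2 := coeff_one_add_X_pow (R := k) r (lam - q) 1 (Nat.pos_of_ne_zero h0) h1
        simpa using h2
    set φ : MvPolynomial (Fin (d + 1)) k →+* Polynomial k :=
      (MvPolynomial.aeval (R := k) (fun m : Fin (d + 1) =>
        if (m : ℕ) = d then Polynomial.X else Polynomial.C (P.coeff (m : ℕ)))).toRingHom with hφ
    set g : Polynomial (Polynomial k) :=
      Polynomial.map (Polynomial.C) P + Polynomial.C Polynomial.X * Polynomial.X ^ d with hg
    have hmap : (genPoly k d).map φ = g := by
      refine Polynomial.ext fun t => ?_
      rw [Polynomial.coeff_map, genPoly_coeff, hg, Polynomial.coeff_add, Polynomial.coeff_map,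
        Polynomial.coeff_C_mul, Polynomial.coeff_X_pow]
      by_cases h : t < d + 1
      · rw [dif_pos h]
        have hx : φ (MvPolynomial.X (⟨t, h⟩ : Fin (d + 1))) =
            if t = d then Polynomial.X else Polynomial.C (P.coeff t) := by
          simp only [hφ, AlgHom.toRingHom_eq_coe, RingHom.coe_coe, MvPolynomial.aeval_X]
        rw [hx]
        by_cases htd : t = d
        · subst htd
          rw [Polynomial.coeff_eq_zero_of_natDegree_lt hPdeg]
          simp
        · rw [if_neg htd, if_neg htd]; ring
      · rw [dif_neg h, map_zero]
        have h1 : P.coeff t = 0 := Polynomial.coeff_eq_zero_of_natDegree_lt (by omega)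
        rw [h1, if_neg (show ¬ t = d by omega)]; simp
    have hφb : φ (bcoef k d lam n) = (g ^ lam).coeff n := by
      unfold bcoef
      rw [← Polynomial.coeff_map, Polynomial.map_pow, hmap]
    have hkey : ((g ^ lam).coeff n).coeff q
        = ((if r = 0 then 1 else lam - q : ℕ) : k) * ((lam.choose (lam - q) : ℕ) : k) := by
      rw [hg, add_pow, Polynomial.finset_sum_coeff, Polynomial.finset_sum_coeff,
        Finset.sum_eq_single (lam - q)]
      · rw [term_coeff]
        have hs : lam - (lam - q) = q := by omega
        rw [hs, if_pos ⟨rfl, by omega⟩]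
        have he3 : n - d * q = r := by omega
        rw [he3, hPr]
      · intro j hj hne
        simp only [Finset.mem_range] at hj
        rw [term_coeff, if_neg (fun hc => hne (by omega))]
      · intro hmem
        exact absurd (Finset.mem_range.mpr (by omega)) hmem
    have hne : ((if r = 0 then 1 else lam - q : ℕ) : k) * ((lam.choose (lam - q) : ℕ) : k) ≠ 0 := by
      apply mul_ne_zero
      · rw [Ne, CharP.cast_eq_zero_iff k p]
        split_ifs with h0
        · intro hc
          have := Nat.le_of_dvd one_pos hc
          have := hp.two_le
          omega
        · intro hc
          have h1 := Nat.le_of_dvd (by have := hqlt h0; omega) hc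
          omega
      · rw [Ne, CharP.cast_eq_zero_iff k p]
        exact not_dvd_choose hp (by omega) hlam2
    apply hne
    rw [← hkey, ← hφb, hzero, map_zero, Polynomial.coeff_zero]
end

section
/- There exists a bijection σ₀ : R_N → C_N whose graph is contained in T_N, and which is the unique lexicographic maximizer in the following sense: for every bijection σ : R_N → C_N with σ ≠ σ₀ whose graph is contained in T_N, there exists ℓ ∈ {1,…,d} such that e_m(σ) = e_m(σ₀) for all m with ℓ < m ≤ d and e_ℓ(σ) < e_ℓ(σ₀), where for a bijection τ : R_N → C_N with graph in T_N and 1 ≤ m ≤ d we set e_m(τ) = #{ (i,λ) ∈ R_N : φ((i,λ), τ(i,λ)) = m }. -/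
/-- `e_m(τ)`: the number of rows `(i,λ) ∈ R_N` with `φ((i,λ), τ(i,λ)) = m`,
where `φ((i,λ),i') = p·i − i' − (λ−1)·d`. -/
noncomputable def eCount (p d : ℤ) (RN : Set (ℤ × ℤ)) (τ : ℤ × ℤ → ℤ) (m : ℤ) : ℕ :=
  {x ∈ RN | p * x.1 - τ x - (x.2 - 1) * d = m}.ncard

open Finset

section Digits

variable {K : ℕ} {f g : ℕ → ℕ}

theorem sum_range_mul_pow_lt (hg : ∀ m, g m < K) (n : ℕ) :
    ∑ m ∈ range n, g m * K ^ m < K ^ n := by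
  induction n with
  | zero => simp
  | succ n ih =>
    calc ∑ m ∈ range (n + 1), g m * K ^ m < K ^ n + g n * K ^ n := by
          rw [sum_range_succ]; omega
      _ = (g n + 1) * K ^ n := by ring
      _ ≤ K ^ (n + 1) := by rw [pow_succ']; exact Nat.mul_le_mul_right _ (hg n)

theorem exists_lt_of_sum_mul_pow_lt (hg : ∀ m, g m < K) (n : ℕ)
    (h : ∑ m ∈ range n, f m * K ^ m < ∑ m ∈ range n, g m * K ^ m) :
    ∃ ℓ < n, (∀ m, ℓ < m → m < n → f m = g m) ∧ f ℓ < g ℓ := by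
  induction n with
  | zero => simp at h
  | succ n ih =>
    rw [sum_range_succ, sum_range_succ] at h
    rcases lt_trichotomy (f n) (g n) with hlt | heq | hgt
    · exact ⟨n, n.lt_succ_self, fun m h₁ h₂ => by omega, hlt⟩
    · obtain ⟨ℓ, hℓ, hagree, hℓlt⟩ := ih (by rw [heq] at h; omega)
      refine ⟨ℓ, by omega, fun m h₁ h₂ => ?_, hℓlt⟩
      rcases Nat.lt_succ_iff_lt_or_eq.mp h₂ with h₂ | rfl
      · exact hagree m h₁ h₂
      · exact heq
    · have hlow := sum_range_mul_pow_lt hg n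
      have htop : (g n + 1) * K ^ n ≤ f n * K ^ n := Nat.mul_le_mul_right _ hgt
      rw [add_one_mul] at htop
      omega

theorem pow_add_pow_lt_pow_add_pow {u v e w : ℕ} (hK : 2 ≤ K) (hu : u < e) (hv : v < e) :
    K ^ u + K ^ v < K ^ e + K ^ w := by
  obtain ⟨e, rfl⟩ : ∃ e', e = e' + 1 := ⟨e - 1, by omega⟩
  have hu' : K ^ u ≤ K ^ e := Nat.pow_le_pow_right (by omega) (by omega)
  have hv' : K ^ v ≤ K ^ e := Nat.pow_le_pow_right (by omega) (by omega)
  have hw : 0 < K ^ w := Nat.pow_pos (by omega)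
  have h2 : 2 * K ^ e ≤ K * K ^ e := Nat.mul_le_mul_right _ hK
  rw [pow_succ']
  linarith

end Digits

section Matching

variable {ι : Type*} (a : ι → ℤ) (d : ℤ) (A : Finset ι) (C : Finset ℤ)

def IsAdmissible (σ : ι → ℤ) : Prop :=
  Set.BijOn σ A C ∧ ∀ x ∈ A, a x - σ x ≤ d

def defectCount (σ : ι → ℤ) (m : ℤ) : ℕ :=
  #{x ∈ A | a x - σ x = m}

def weight (K : ℕ) (σ : ι → ℤ) : ℕ :=
  ∑ x ∈ A, K ^ (a x - σ x - 1).toNat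

variable {a d A C}

theorem exists_isAdmissible (hcard : #C ≤ #A)
    (hHall : ∀ s, #{x ∈ A | s ≤ a x} ≤ #{c ∈ C | s - d ≤ c}) :
    ∃ σ, IsAdmissible a d A C σ := by
  classical
  let t : A → Finset ℤ := fun x => {c ∈ C | a x - d ≤ c}
  obtain ⟨f, hf, hft⟩ := (all_card_le_biUnion_card_iff_exists_injective t).mp fun s => by
    rcases s.eq_empty_or_nonempty with rfl | hs
    · simp
    obtain ⟨x₀, hx₀, hmin⟩ := s.exists_min_image (fun x => a x) hs
    calc #s ≤ #{x ∈ A | a x₀ ≤ a x} :=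
          card_le_card_of_injOn Subtype.val
            (fun x hx => mem_filter.mpr ⟨x.2, hmin x hx⟩) Subtype.val_injective.injOn
      _ ≤ #(t x₀) := hHall (a x₀)
      _ ≤ #(s.biUnion t) := card_le_card (subset_biUnion_of_mem t hx₀)
  have hfC (x : A) : f x ∈ C ∧ a x - f x ≤ d := by
    obtain ⟨hC, hle⟩ := mem_filter.mp (hft x)
    exact ⟨hC, by omega⟩
  let σ : ι → ℤ := fun x => if hx : x ∈ A then f ⟨x, hx⟩ else 0
  have hσ {x : ι} (hx : x ∈ A) : σ x = f ⟨x, hx⟩ := dif_pos hx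
  have hmaps : Set.MapsTo σ A C := fun x hx => by
    rw [Finset.mem_coe, hσ hx]; exact (hfC _).1
  have hinj : Set.InjOn σ A := fun x hx y hy hxy => by
    rw [hσ hx, hσ hy] at hxy
    exact congrArg Subtype.val (hf hxy)
  refine ⟨σ, ⟨hmaps, hinj, surjOn_of_injOn_of_card_le σ hmaps hinj hcard⟩, fun x hx => ?_⟩
  rw [hσ hx]; exact (hfC ⟨x, hx⟩).2

theorem exists_isAdmissible_weight_max {K : ℕ} (hK : 0 < K) (hex : ∃ σ, IsAdmissible a d A C σ) :
    ∃ σ₀, IsAdmissible a d A C σ₀ ∧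
      ∀ σ, IsAdmissible a d A C σ → weight a A K σ ≤ weight a A K σ₀ := by
  let W : Set ℕ := {w | ∃ σ, IsAdmissible a d A C σ ∧ weight a A K σ = w}
  have hbdd : BddAbove W := by
    refine ⟨#A • K ^ (d - 1).toNat, ?_⟩
    rintro _ ⟨σ, hσ, rfl⟩
    refine sum_le_card_nsmul _ _ _ fun x hx => Nat.pow_le_pow_right hK ?_
    have := hσ.2 x hx
    omega
  obtain ⟨σ, hσ⟩ := hex
  obtain ⟨σ₀, hσ₀, hw⟩ := Nat.sSup_mem (s := W) ⟨_, σ, hσ, rfl⟩ hbdd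
  exact ⟨σ₀, hσ₀, fun σ hσ => hw ▸ le_csSup hbdd ⟨σ, hσ, rfl⟩⟩

theorem weight_lt_weight_comp_swap [DecidableEq ι] {K : ℕ} (hK : 2 ≤ K) {σ : ι → ℤ} {x₀ b : ι}
    (hx₀ : x₀ ∈ A) (hb : b ∈ A) (hbx₀ : b ≠ x₀) (hσx₀ : σ x₀ < a x₀) (hab : a b < a x₀)
    (hσb : σ b < σ x₀) :
    weight a A K σ < weight a A K (σ ∘ Equiv.swap x₀ b) := by
  have hbA : b ∈ A.erase x₀ := mem_erase.mpr ⟨hbx₀, hb⟩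
  have hsplit (τ : ι → ℤ) : weight a A K τ = K ^ (a x₀ - τ x₀ - 1).toNat +
      (K ^ (a b - τ b - 1).toNat + ∑ x ∈ (A.erase x₀).erase b, K ^ (a x - τ x - 1).toNat) := by
    rw [weight, ← add_sum_erase _ _ hx₀, ← add_sum_erase _ _ hbA]
  have hrest : ∑ x ∈ (A.erase x₀).erase b, K ^ (a x - (σ ∘ Equiv.swap x₀ b) x - 1).toNat =
      ∑ x ∈ (A.erase x₀).erase b, K ^ (a x - σ x - 1).toNat := by
    refine sum_congr rfl fun x hx => ?_
    obtain ⟨hxb, hx⟩ := mem_erase.mp hx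
    rw [Function.comp_apply, Equiv.swap_apply_of_ne_of_ne (mem_erase.mp hx).1 hxb]
  rw [hsplit, hsplit, hrest, Function.comp_apply, Function.comp_apply, Equiv.swap_apply_left,
    Equiv.swap_apply_right, ← add_assoc, ← add_assoc, add_lt_add_iff_right]
  exact pow_add_pow_lt_pow_add_pow hK (by omega) (by omega)

theorem exists_weight_lt_of_lt {K : ℕ} (hK : 2 ≤ K) (ha : Set.InjOn a A)
    (hlt : ∀ x ∈ A, ∀ c ∈ C, c < a x) {σ τ : ι → ℤ} (hσ : IsAdmissible a d A C σ)
    (hτ : Set.BijOn τ A C) {x₀ : ι} (hx₀ : x₀ ∈ A) (hτx₀ : a x₀ - τ x₀ ≤ d)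
    (htop : ∀ y ∈ A, σ y ≠ τ y → a y ≤ a x₀) (hτσ : τ x₀ < σ x₀) :
    ∃ σ', IsAdmissible a d A C σ' ∧ weight a A K σ < weight a A K σ' := by
  classical
  obtain ⟨b, hb, hσb⟩ := hσ.1.surjOn (hτ.mapsTo hx₀)
  have hbx₀ : b ≠ x₀ := by rintro rfl; exact hτσ.ne' hσb
  have hab : a b < a x₀ := by
    refine (htop b hb fun h => hbx₀ (hτ.injOn hb hx₀ ?_)).lt_of_ne (ha.ne hb hx₀ hbx₀)
    rw [← h, hσb]
  refine ⟨σ ∘ Equiv.swap x₀ b, ⟨hσ.1.comp (Equiv.bijOn_swap hx₀ hb), fun x hx => ?_⟩,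
    weight_lt_weight_comp_swap hK hx₀ hb hbx₀ (hlt x₀ hx₀ _ (hσ.1.mapsTo hx₀)) hab (hσb ▸ hτσ)⟩
  rw [Function.comp_apply]
  rcases eq_or_ne x x₀ with rfl | hx₀'
  · rwa [Equiv.swap_apply_left, hσb]
  rcases eq_or_ne x b with rfl | hb'
  · rw [Equiv.swap_apply_right]; have := hσ.2 x₀ hx₀; omega
  · rw [Equiv.swap_apply_of_ne_of_ne hx₀' hb']; exact hσ.2 x hx

theorem weight_lt_of_forall_weight_le {K : ℕ} (hK : 2 ≤ K) (ha : Set.InjOn a A)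
    (hlt : ∀ x ∈ A, ∀ c ∈ C, c < a x) {σ₀ σ : ι → ℤ} (hσ₀ : IsAdmissible a d A C σ₀)
    (hmax : ∀ σ, IsAdmissible a d A C σ → weight a A K σ ≤ weight a A K σ₀)
    (hσ : IsAdmissible a d A C σ) (hne : ¬ Set.EqOn σ σ₀ A) :
    weight a A K σ < weight a A K σ₀ := by
  classical
  have hD : {x ∈ A | σ x ≠ σ₀ x}.Nonempty := by simpa [filter_nonempty_iff, Set.EqOn] using hne
  obtain ⟨x₀, hx₀D, hx₀max⟩ := exists_max_image _ a hD
  obtain ⟨hx₀, hx₀ne⟩ := mem_filter.mp hx₀D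
  have htop (y) (hy : y ∈ A) (hne : σ y ≠ σ₀ y) : a y ≤ a x₀ := hx₀max y (mem_filter.mpr ⟨hy, hne⟩)
  rcases hx₀ne.lt_or_gt with hlt₀ | hgt₀
  · obtain ⟨σ', hσ', hw⟩ := exists_weight_lt_of_lt hK ha hlt hσ₀ hσ.1 hx₀ (hσ.2 x₀ hx₀)
      (fun y hy h => htop y hy (Ne.symm h)) hlt₀
    exact absurd (hmax σ' hσ') hw.not_ge
  · obtain ⟨σ', hσ', hw⟩ := exists_weight_lt_of_lt hK ha hlt hσ hσ₀.1 hx₀ (hσ₀.2 x₀ hx₀) htop hgt₀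
    exact hw.trans_le (hmax σ' hσ')

theorem weight_eq_sum_defectCount (K : ℕ) (hlt : ∀ x ∈ A, ∀ c ∈ C, c < a x) {σ : ι → ℤ}
    (hσ : IsAdmissible a d A C σ) :
    weight a A K σ = ∑ m ∈ range d.toNat, defectCount a A σ (m + 1) * K ^ m := by
  have hmaps : ∀ x ∈ A, (a x - σ x - 1).toNat ∈ range d.toNat := fun x hx => by
    have := hlt x hx _ (hσ.1.mapsTo hx); have := hσ.2 x hx
    rw [mem_range]; omega
  rw [weight, ← sum_fiberwise_of_maps_to hmaps]
  refine sum_congr rfl fun m _ => ?_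
  rw [sum_congr rfl fun x hx => by rw [(mem_filter.mp hx).2], sum_const, smul_eq_mul,
    defectCount]
  congr 2
  refine filter_congr fun x hx => ?_
  have := hlt x hx _ (hσ.1.mapsTo hx)
  omega

theorem exists_isAdmissible_lex_max (ha : Set.InjOn a A)
    (hlt : ∀ x ∈ A, ∀ c ∈ C, c < a x) (hex : ∃ σ, IsAdmissible a d A C σ) :
    ∃ σ₀, IsAdmissible a d A C σ₀ ∧ ∀ σ, IsAdmissible a d A C σ → ¬ Set.EqOn σ σ₀ A →
      ∃ ℓ : ℤ, 1 ≤ ℓ ∧ ℓ ≤ d ∧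
        (∀ m : ℤ, ℓ < m → m ≤ d → defectCount a A σ m = defectCount a A σ₀ m) ∧
        defectCount a A σ ℓ < defectCount a A σ₀ ℓ := by
  obtain ⟨σ₀, hσ₀, hmax⟩ := exists_isAdmissible_weight_max (K := #A + 2) (by omega) hex
  refine ⟨σ₀, hσ₀, fun σ hσ hne => ?_⟩
  have hw := weight_lt_of_forall_weight_le (by omega) ha hlt hσ₀ hmax hσ hne
  rw [weight_eq_sum_defectCount _ hlt hσ, weight_eq_sum_defectCount _ hlt hσ₀] at hw
  obtain ⟨ℓ, hℓ, hagree, hℓlt⟩ := exists_lt_of_sum_mul_pow_lt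
    (fun m => (card_filter_le _ _).trans_lt (Nat.lt_add_of_pos_right two_pos)) _ hw
  refine ⟨ℓ + 1, by omega, by omega, fun m h₁ h₂ => ?_, hℓlt⟩
  have := hagree (m - 1).toNat (by omega) (by omega)
  rwa [show ((m - 1).toNat : ℤ) + 1 = m by omega] at this

end Matching

section Rows

variable {p d J : ℤ} {x : ℤ × ℤ}

/-- `φ((i,λ), i') = rowValue p d (i,λ) - i'`, and `((i,λ), i') ∈ T_N` iff this is at most `d`. -/
def rowValue (p d : ℤ) (x : ℤ × ℤ) : ℤ := p * x.1 - (x.2 - 1) * d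

theorem rowValue_sub_le_iff {c : ℤ} : rowValue p d x - c ≤ d ↔ p * x.1 - c ≤ x.2 * d := by
  unfold rowValue; constructor <;> intro h <;> linarith

theorem eCount_coe_finset (A : Finset (ℤ × ℤ)) (τ : ℤ × ℤ → ℤ) (m : ℤ) :
    eCount p d A τ m = defectCount (rowValue p d) A τ m := by
  rw [eCount, defectCount, ← Set.ncard_coe_finset, coe_filter]
  simp only [mem_coe, rowValue, sub_right_comm _ (τ _)]

theorem rowValue_bounds (hx : x ∈ Rset p d J) :
    (p - J + 1) * d < p * rowValue p d x ∧ p * rowValue p d x < (2 * p - J) * d := by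
  obtain ⟨-, -, hlo, hhi⟩ := hx
  unfold rowValue
  constructor <;> linarith

theorem rowValue_injOn (hp : Prime p) (hJp : J < p) (hpd : ¬ p ∣ d) :
    Set.InjOn (rowValue p d) (Rset p d J) := by
  rintro x ⟨hx₁, hx₂, -⟩ y ⟨hy₁, hy₂, -⟩ hxy
  have hcross : p * (x.1 - y.1) = (x.2 - y.2) * d := by unfold rowValue at hxy; linarith
  have hsnd : x.2 - y.2 = 0 :=
    Int.eq_zero_of_abs_lt_dvd ((hp.dvd_mul.mp ⟨_, hcross.symm⟩).resolve_right hpd)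
      (abs_sub_lt_iff.mpr ⟨by omega, by omega⟩)
  rw [hsnd, zero_mul, mul_eq_zero] at hcross
  exact Prod.ext (by have := hcross.resolve_left hp.ne_zero; omega) (by omega)

theorem lt_rowValue (hp : 0 < p) (hd : 0 < d) {c : ℤ} (hc : c ∈ Cset p d J)
    (hx : x ∈ Rset p d J) : c < rowValue p d x :=
  lt_of_mul_lt_mul_left (by nlinarith [hc.2.1, (rowValue_bounds hx).1]) hp.le

theorem rowValue_sub_mem_Cset (hp : Prime p) (hJp : J < p) (hpd : ¬ p ∣ d)
    (hx : x ∈ Rset p d J) (hdx : d < rowValue p d x) : rowValue p d x - d ∈ Cset p d J := by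
  refine ⟨by omega, by linarith [(rowValue_bounds hx).2], fun hdvd => ?_⟩
  obtain ⟨hx₁, hx₂, -⟩ := hx
  have hsnd : p ∣ x.2 * d := by
    obtain ⟨k, hk⟩ := hdvd
    exact ⟨x.1 - k, by unfold rowValue at hk; linarith⟩
  have := Int.eq_zero_of_abs_lt_dvd ((hp.dvd_mul.mp hsnd).resolve_right hpd)
    (abs_lt.mpr ⟨by omega, by omega⟩)
  omega

theorem Rset_finite (hp : Prime p) (hp0 : 0 < p) (hJp : J < p) (hd : 0 < d) (hpd : ¬ p ∣ d) :
    (Rset p d J).Finite := by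
  refine Set.Finite.of_finite_image ((Set.finite_Ioo 0 (2 * d)).subset ?_)
    (rowValue_injOn hp hJp hpd)
  rintro _ ⟨x, hx, rfl⟩
  obtain ⟨hlo, hhi⟩ := rowValue_bounds hx
  have hJ : 0 < J := hx.1.trans hx.2.1
  constructor <;> nlinarith

theorem Cset_finite (hp : 0 < p) : (Cset p d J).Finite :=
  (Set.finite_Ioo 0 ((p - J) * d)).subset fun c ⟨hc, hcp, _⟩ => ⟨hc, by nlinarith⟩

theorem card_filter_le_rowValue_le (hp : Prime p) (hJp : J < p) (hpd : ¬ p ∣ d)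
    {A : Finset (ℤ × ℤ)} {C : Finset ℤ} (hA : ↑A ⊆ Rset p d J) (hC : ↑C ⊆ Cset p d J)
    (hup : ∀ c ∈ C, ∀ y ∈ Cset p d J, c ≤ y → y ∈ C) (hcard : #A ≤ #C) (s : ℤ) :
    #{x ∈ A | s ≤ rowValue p d x} ≤ #{c ∈ C | s - d ≤ c} := by
  by_cases hall : ∀ c ∈ C, s - d ≤ c
  · rw [filter_true_of_mem hall]
    exact (card_filter_le _ _).trans hcard
  simp only [not_forall, not_le] at hall
  obtain ⟨c₀, hc₀, hc₀s⟩ := hall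
  refine card_le_card_of_injOn (fun x => rowValue p d x - d) (fun x hx => ?_)
    (fun x hx y hy hxy => rowValue_injOn hp hJp hpd (hA (mem_filter.mp hx).1)
      (hA (mem_filter.mp hy).1) (sub_left_injective hxy))
  obtain ⟨hxA, hsx⟩ := mem_filter.mp hx
  dsimp only
  have hc₀pos := (hC hc₀).1
  have hmem := rowValue_sub_mem_Cset hp hJp hpd (hA hxA) (by omega)
  exact mem_filter.mpr ⟨hup c₀ hc₀ _ hmem (by omega), by omega⟩

end Rows

theorem stmt12_general (p : ℕ) (hp : p.Prime) (d : ℤ) (hd : 0 < d)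
    (hpd : ¬ (p : ℤ) ∣ d) (J : ℤ) (hJ2 : J < (p : ℤ))
    (RN : Set (ℤ × ℤ)) (CN : Set ℤ)
    (hcase :
      (2 * J ≤ (p : ℤ) + 1 ∧ RN = Rset p d J ∧ CN ⊆ Cset p d J ∧
        CN.ncard = (Rset p d J).ncard ∧
        ∀ x ∈ CN, ∀ y ∈ Cset p d J \ CN, y < x) ∨
      ((p : ℤ) + 1 ≤ 2 * J ∧ CN = Cset p d J ∧ RN ⊆ Rset p d J ∧
        RN.ncard = (Cset p d J).ncard ∧
        ∀ x ∈ RN, ∀ y ∈ Rset p d J \ RN, x.1 < y.1)) :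
    ∃ σ₀ : ℤ × ℤ → ℤ, Set.BijOn σ₀ RN CN ∧
      (∀ x ∈ RN, (p : ℤ) * x.1 - σ₀ x ≤ x.2 * d) ∧
      ∀ σ : ℤ × ℤ → ℤ, Set.BijOn σ RN CN →
        (∀ x ∈ RN, (p : ℤ) * x.1 - σ x ≤ x.2 * d) →
        ¬ Set.EqOn σ σ₀ RN →
        ∃ ℓ : ℤ, 1 ≤ ℓ ∧ ℓ ≤ d ∧
          (∀ m : ℤ, ℓ < m → m ≤ d →
            eCount p d RN σ m = eCount p d RN σ₀ m) ∧
          eCount p d RN σ ℓ < eCount p d RN σ₀ ℓ := by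
  obtain ⟨hR, hC, hcard, hup⟩ : RN ⊆ Rset p d J ∧ CN ⊆ Cset p d J ∧ RN.ncard = CN.ncard ∧
      ∀ c ∈ CN, ∀ y ∈ Cset p d J, c ≤ y → y ∈ CN := by
    rcases hcase with ⟨-, rfl, hC, hn, htop⟩ | ⟨-, rfl, hR, hn, -⟩
    · exact ⟨subset_rfl, hC, hn.symm, fun c hc y hy hcy =>
        by_contra fun hyC => (htop c hc y ⟨hy, hyC⟩).not_ge hcy⟩
    · exact ⟨hR, subset_rfl, hn, fun _ _ y hy _ => hy⟩
  have hpZ : Prime (p : ℤ) := Nat.prime_iff_prime_int.mp hp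
  have hp0 : (0 : ℤ) < p := by exact_mod_cast hp.pos
  obtain ⟨A, rfl⟩ := ((Rset_finite hpZ hp0 hJ2 hd hpd).subset hR).exists_finset_coe
  obtain ⟨C, rfl⟩ := ((Cset_finite hp0).subset hC).exists_finset_coe
  rw [Set.ncard_coe_finset, Set.ncard_coe_finset] at hcard
  obtain ⟨σ₀, hσ₀, hlex⟩ := exists_isAdmissible_lex_max ((rowValue_injOn hpZ hJ2 hpd).mono hR)
    (fun x hx c hc => lt_rowValue hp0 hd (hC hc) (hR hx))
    (exists_isAdmissible hcard.ge (card_filter_le_rowValue_le hpZ hJ2 hpd hR hC hup hcard.le))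
  refine ⟨σ₀, hσ₀.1, fun x hx => rowValue_sub_le_iff.mp (hσ₀.2 x hx), fun σ hσ hσT hne => ?_⟩
  simpa only [eCount_coe_finset] using
    hlex σ ⟨hσ, fun x hx => rowValue_sub_le_iff.mpr (hσT x hx)⟩ hne

/-- There is a bijection `σ₀ : R_N → C_N` with graph contained in `T_N` which is
the unique lexicographic maximizer: for any other such bijection `σ`, there is an
`ℓ ∈ {1,…,d}` with `e_m(σ) = e_m(σ₀)` for `ℓ < m ≤ d` and `e_ℓ(σ) < e_ℓ(σ₀)`.
Here, if `1 < J ≤ (p+1)/2` then `R_N = R_J` and `C_N` consists of the `|R_J|`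
largest elements of `C_J`; if `(p+1)/2 ≤ J < p` then `C_N = C_J` and `R_N`
consists of the `|C_J|` elements of `R_J` with smallest first coordinate. -/
theorem stmt12 (p : ℕ) (hp : p.Prime) (hodd : Odd p) (d : ℤ) (hd : 0 < d)
    (hpd : ¬ (p : ℤ) ∣ d) (J : ℤ) (hJ1 : 1 < J) (hJ2 : J < (p : ℤ))
    (RN : Set (ℤ × ℤ)) (CN : Set ℤ)
    (hcase :
      (2 * J ≤ (p : ℤ) + 1 ∧ RN = Rset p d J ∧ CN ⊆ Cset p d J ∧
        CN.ncard = (Rset p d J).ncard ∧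
        ∀ x ∈ CN, ∀ y ∈ Cset p d J \ CN, y < x) ∨
      ((p : ℤ) + 1 ≤ 2 * J ∧ CN = Cset p d J ∧ RN ⊆ Rset p d J ∧
        RN.ncard = (Cset p d J).ncard ∧
        ∀ x ∈ RN, ∀ y ∈ Rset p d J \ RN, x.1 < y.1)) :
    ∃ σ₀ : ℤ × ℤ → ℤ, Set.BijOn σ₀ RN CN ∧
      (∀ x ∈ RN, (p : ℤ) * x.1 - σ₀ x ≤ x.2 * d) ∧
      ∀ σ : ℤ × ℤ → ℤ, Set.BijOn σ RN CN →
        (∀ x ∈ RN, (p : ℤ) * x.1 - σ x ≤ x.2 * d) →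
        ¬ Set.EqOn σ σ₀ RN →
        ∃ ℓ : ℤ, 1 ≤ ℓ ∧ ℓ ≤ d ∧
          (∀ m : ℤ, ℓ < m → m ≤ d →
            eCount p d RN σ m = eCount p d RN σ₀ m) ∧
          eCount p d RN σ ℓ < eCount p d RN σ₀ ℓ :=
  stmt12_general p hp d hd hpd J hJ2 RN CN hcase
end

section
/- For every (i,j) in the set I = { (i,j) ∈ ℤ×ℤ : 0 < j < p, 0 < i, and p·i < (p−j)·d }, the integer p·d − i·p − j·d − 1 is nonnegative; moreover the map (i,j) ↦ p·d − i·p − j·d − 1 is injective on I, since its values are pairwise distinct modulo p·d. -/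
/-- The index set `I = { (i,j) : 0 < j < p, 0 < i, p·i < (p−j)·d }`. -/
def Iset (p d : ℤ) : Set (ℤ × ℤ) :=
  {x : ℤ × ℤ | 0 < x.2 ∧ x.2 < p ∧ 0 < x.1 ∧ p * x.1 < (p - x.2) * d}

/-- For `(i,j) ∈ I`, the integer `p·d − i·p − j·d − 1` is nonnegative, and the map
`(i,j) ↦ p·d − i·p − j·d − 1` is injective on `I`, its values being pairwise
distinct modulo `p·d`. -/
theorem stmt16 (p : ℕ) (hp : p.Prime) (d : ℕ) (hd : 0 < d) (hpd : ¬ p ∣ d) :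
    (∀ x ∈ Iset p d, 0 ≤ (p : ℤ) * d - x.1 * p - x.2 * d - 1) ∧
    (∀ x ∈ Iset p d, ∀ y ∈ Iset p d,
      ((p : ℤ) * d) ∣ (((p : ℤ) * d - x.1 * p - x.2 * d - 1) -
        ((p : ℤ) * d - y.1 * p - y.2 * d - 1)) → x = y) ∧
    Set.InjOn (fun x : ℤ × ℤ => (p : ℤ) * d - x.1 * p - x.2 * d - 1)
      (Iset p d) := by
  have hp1 : (1 : ℤ) < p := by exact_mod_cast hp.one_lt
  have hd0 : (0 : ℤ) < d := by exact_mod_cast hd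
  have hpz : ((p : ℤ)) ≠ 0 := by positivity
  have hpprime : Prime ((p : ℤ)) := Nat.prime_iff_prime_int.mp hp
  have hpdz : ¬ (p : ℤ) ∣ (d : ℤ) := by exact_mod_cast hpd
  have key : ∀ x ∈ Iset p d, ∀ y ∈ Iset p d,
      ((p : ℤ) * d) ∣ (((p : ℤ) * d - x.1 * p - x.2 * d - 1) -
        ((p : ℤ) * d - y.1 * p - y.2 * d - 1)) → x = y := by
    rintro ⟨x1, x2⟩ ⟨hx1, hx2, hx3, hx4⟩ ⟨y1, y2⟩ ⟨hy1, hy2, hy3, hy4⟩ hdvd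
    simp only at *
    have hdvd' : ((p : ℤ) * d) ∣ (y1 - x1) * p + (y2 - x2) * d := by
      have : ((p : ℤ) * d - x1 * p - x2 * d - 1) - ((p : ℤ) * d - y1 * p - y2 * d - 1)
          = (y1 - x1) * p + (y2 - x2) * d := by ring
      rwa [this] at hdvd
    have hpdvd : (p : ℤ) ∣ (y2 - x2) * d := by
      have h1 : (p : ℤ) ∣ (y1 - x1) * p + (y2 - x2) * d :=
        (dvd_mul_right (p : ℤ) d).trans hdvd'
      have h2 : (p : ℤ) ∣ (y1 - x1) * p := dvd_mul_left _ _
      exact (dvd_add_right h2).mp h1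
    have hp2 : (p : ℤ) ∣ (y2 - x2) := by
      rcases hpprime.dvd_mul.mp hpdvd with h | h
      · exact h
      · exact absurd h hpdz
    have he2 : y2 = x2 := by
      have := Int.eq_zero_of_abs_lt_dvd hp2 (by rw [abs_lt]; constructor <;> linarith)
      omega
    subst he2
    have hdd : (d : ℤ) ∣ (y1 - x1) := by
      have : ((p : ℤ) * d) ∣ (p : ℤ) * (y1 - x1) := by
        have h : (y1 - x1) * p + (y2 - y2) * d = (p : ℤ) * (y1 - x1) := by ring
        rwa [h] at hdvd'
      exact (mul_dvd_mul_iff_left hpz).mp this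
    have hx1d : x1 < d := by nlinarith
    have hy1d : y1 < d := by nlinarith
    have he1 : y1 = x1 := by
      have := Int.eq_zero_of_abs_lt_dvd hdd (by rw [abs_lt]; constructor <;> linarith)
      omega
    simp [he1]
  refine ⟨?_, key, ?_⟩
  · rintro ⟨x1, x2⟩ ⟨hx1, hx2, hx3, hx4⟩
    simp only at *
    nlinarith
  · intro x hx y hy hxy
    exact key x hx y hy (by simp only at hxy; rw [hxy]; exact dvd_refl _ |>.trans (by simp))
end
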